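/- Let J ⊆ I ⊊ R be ideals of a Noetherian local ring R. If the ideal I/J is of linear type over R/J (e.g., if I is generated by a regular sequence modulo J), then J ∩ I^t = J·I^{t-1} for every positive integer t. -/

import Mathlib

open Polynomial

/-- The presentation `A[T₁,…,Tₙ] → Rees_A(I)`, `Tᵢ ↦ fᵢ·u`, attached to a family of
elements of `I`. -/
noncomputable def reesPres {A : Type*} [CommRing A] (I : Ideal A) {n : ℕ}
    (f : Fin n → A) (hf : ∀ i, f i ∈ I) :
    MvPolynomial (Fin n) A →ₐ[A] reesAlgebra I :=
  MvPolynomial.aeval fun i =>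
    (⟨Polynomial.C (f i) * Polynomial.X, by
      rw [Polynomial.C_mul_X_eq_monomial]
      exact reesAlgebra.monomial_mem.mpr (by simpa using hf i)⟩ : reesAlgebra I)

/-- An ideal `I` of `A` is of linear type if, for every (equivalently, some) finite
generating family of `I`, the kernel of the presentation `A[T] ↠ Rees_A(I)` is generated
by its elements that are homogeneous of degree 1; i.e. the natural surjection
`S_A(I) ↠ Rees_A(I)` from the symmetric algebra is an isomorphism. -/
def IsLinearType (A : Type*) [CommRing A] (I : Ideal A) : Prop :=
  ∀ (n : ℕ) (f : Fin n → A) (hf : ∀ i, f i ∈ I),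
    Ideal.span (Set.range f) = I →
    RingHom.ker (reesPres I f hf : MvPolynomial (Fin n) A →+* reesAlgebra I) =
      Ideal.span {F : MvPolynomial (Fin n) A |
        F ∈ RingHom.ker (reesPres I f hf : MvPolynomial (Fin n) A →+* reesAlgebra I) ∧
        F.IsHomogeneous 1}

/-!
Write `x ∈ J ∩ I^(s+1)` as `F(f)` with `F` homogeneous of degree `s + 1` in generators `f`
of `I`. Modulo `J`, `F` is a relation of degree `s + 1` among the generators of `I/J`, so
linear type makes it a combination `∑ aₖ Lₖ` of linear relations `Lₖ` with `aₖ`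
homogeneous of degree `s`. Lifting the `aₖ` and `Lₖ` to `R` gives `G` with `G(f) ∈ J I^s` (as
`Lₖ(f) ∈ J` and `aₖ(f) ∈ I^s`), while `F - G` has its coefficients in `J`, so
`(F - G)(f) ∈ J I^(s+1)`.
-/

namespace MvPolynomial

variable {R S σ : Type*}

section CommSemiring

variable [CommSemiring R]

theorem map_homogeneousComponent [CommSemiring S] (φ : R →+* S) (n : ℕ)
    (p : MvPolynomial σ R) :
    map φ (homogeneousComponent n p) = homogeneousComponent n (map φ p) := by
  ext d
  simp only [coeff_map, coeff_homogeneousComponent]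
  split_ifs <;> simp

theorem exists_isHomogeneous_map_eq [CommSemiring S] {φ : R →+* S}
    (hφ : Function.Surjective φ) {n : ℕ} {P : MvPolynomial σ S} (hP : P.IsHomogeneous n) :
    ∃ Q : MvPolynomial σ R, Q.IsHomogeneous n ∧ map φ Q = P := by
  obtain ⟨Q, rfl⟩ := map_surjective φ hφ P
  exact ⟨homogeneousComponent n Q, homogeneousComponent_isHomogeneous n Q,
    by rw [map_homogeneousComponent, homogeneousComponent_eq_self hP]⟩

theorem eval_mem_mul_pow_of_coeff_mem {I J : Ideal R} {f : σ → R} (hf : ∀ i, f i ∈ I)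
    {t : ℕ} {F : MvPolynomial σ R} (hF : F.IsHomogeneous t) (hc : ∀ d, coeff d F ∈ J) :
    eval f F ∈ J * I ^ t := by
  rw [F.as_sum, map_sum]
  refine Ideal.sum_mem _ fun d hd => ?_
  rw [eval_monomial]
  have hfI : Ideal.span (Set.range f) ≤ I := Ideal.span_le.mpr (Set.range_subset_iff.mpr hf)
  refine Ideal.mul_mem_mul (hc d) (Ideal.pow_right_mono hfI t ?_)
  refine (Ideal.mem_span_pow_iff_exists_isHomogeneous f _).mpr
    ⟨monomial d 1, isHomogeneous_monomial 1 ?_, by simp [eval_monomial]⟩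
  rw [Finsupp.degree_eq_weight_one]
  exact hF (mem_support_iff.mp hd)

theorem aeval_C_mul_X_of_isHomogeneous {f : σ → R} {m : ℕ} {F : MvPolynomial σ R}
    (hF : F.IsHomogeneous m) :
    aeval (fun i => Polynomial.C (f i) * Polynomial.X) F
      = Polynomial.C (eval f F) * Polynomial.X ^ m := by
  conv_lhs => rw [F.as_sum]
  conv_rhs => rw [F.as_sum]
  simp only [map_sum, Finset.sum_mul]
  refine Finset.sum_congr rfl fun d hd => ?_
  have hdeg : ∑ i ∈ d.support, d i = m := by
    rw [← Finsupp.degree_apply, Finsupp.degree_eq_weight_one]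
    exact hF (mem_support_iff.mp hd)
  simp only [aeval_monomial, eval_monomial, Finsupp.prod, mul_pow, Finset.prod_mul_distrib,
    Finset.prod_pow_eq_pow_sum, hdeg, Polynomial.algebraMap_eq, map_mul, map_prod, map_pow]
  ring

end CommSemiring

variable [CommRing R]

theorem homogeneousComponent_add_mul_of_isHomogeneous {i j : ℕ} (a : MvPolynomial σ R)
    {L : MvPolynomial σ R} (hL : L.IsHomogeneous j) :
    homogeneousComponent (i + j) (a * L) = homogeneousComponent i a * L := by
  let := gradedAlgebra (σ := σ) (R := R)
  simp only [← decomposition.decompose'_apply]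
  exact DirectSum.coe_decompose_mul_add_of_right_mem (homogeneousSubmodule σ R)
    ((mem_homogeneousSubmodule j L).mpr hL)

theorem mem_span_image2_of_mem_span {i j : ℕ} {S : Set (MvPolynomial σ R)}
    (hS : ∀ L ∈ S, L.IsHomogeneous j) {P : MvPolynomial σ R} (hP : P ∈ Ideal.span S)
    (hPh : P.IsHomogeneous (i + j)) :
    P ∈ Submodule.span R (Set.image2 (· * ·) {a | a.IsHomogeneous i} S) := by
  obtain ⟨c, hcS, rfl⟩ := Submodule.mem_span_set.mp hP
  rw [← homogeneousComponent_eq_self hPh, Finsupp.sum, map_sum]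
  refine Submodule.sum_mem _ fun L hL => Submodule.subset_span ?_
  rw [smul_eq_mul, homogeneousComponent_add_mul_of_isHomogeneous _ (hS L (hcS hL))]
  exact Set.mem_image2_of_mem (homogeneousComponent_isHomogeneous i _) (hcS hL)

theorem exists_isHomogeneous_map_eq_and_eval_mem_mul_pow {I J : Ideal R} {f : σ → R}
    (hf : ∀ k, f k ∈ I) {i j : ℕ} {P : MvPolynomial σ (R ⧸ J)}
    (hP : P ∈ Submodule.span (R ⧸ J) (Set.image2 (· * ·) {a | a.IsHomogeneous i}
      {L | L.IsHomogeneous j ∧ eval (Ideal.Quotient.mk J ∘ f) L = 0})) :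
    ∃ G : MvPolynomial σ R, G.IsHomogeneous (i + j) ∧ map (Ideal.Quotient.mk J) G = P ∧
      eval f G ∈ J * I ^ i := by
  induction hP using Submodule.span_induction with
  | mem _ h =>
    obtain ⟨a, ha, L, ⟨hL, hLf⟩, rfl⟩ := h
    obtain ⟨Qa, hQa, rfl⟩ := exists_isHomogeneous_map_eq Ideal.Quotient.mk_surjective ha
    obtain ⟨QL, hQL, rfl⟩ := exists_isHomogeneous_map_eq Ideal.Quotient.mk_surjective hL
    have hQLJ : eval f QL ∈ J := by
      rwa [← Ideal.Quotient.eq_zero_iff_mem, map_eval]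
    have hQaI : eval f Qa ∈ I ^ i := by
      simpa using eval_mem_mul_pow_of_coeff_mem (J := ⊤) hf hQa fun _ => trivial
    refine ⟨Qa * QL, hQa.mul hQL, map_mul _ _ _, ?_⟩
    rw [map_mul, mul_comm (eval f Qa)]
    exact Ideal.mul_mem_mul hQLJ hQaI
  | zero => exact ⟨0, isHomogeneous_zero _ _ _, map_zero _, by simp⟩
  | add _ _ _ _ h₁ h₂ =>
    obtain ⟨G₁, hG₁, rfl, hG₁J⟩ := h₁
    obtain ⟨G₂, hG₂, rfl, hG₂J⟩ := h₂
    refine ⟨G₁ + G₂, hG₁.add hG₂, map_add _ _ _, ?_⟩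
    rw [map_add]
    exact add_mem hG₁J hG₂J
  | smul c _ _ h =>
    obtain ⟨G, hG, rfl, hGJ⟩ := h
    obtain ⟨r, rfl⟩ := Ideal.Quotient.mk_surjective c
    refine ⟨C r * G, hG.C_mul r, ?_, ?_⟩
    · rw [map_mul, map_C, smul_eq_C_mul]
    · rw [map_mul, eval_C]
      exact Ideal.mul_mem_left _ r hGJ

end MvPolynomial

section ReesPresentation

variable {A : Type*} [CommRing A] {I : Ideal A} {n : ℕ} {f : Fin n → A} (hf : ∀ i, f i ∈ I)

theorem coe_reesPres_apply (F : MvPolynomial (Fin n) A) :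
    (reesPres I f hf F : A[X]) =
      MvPolynomial.aeval (fun i => Polynomial.C (f i) * Polynomial.X) F := by
  change (reesAlgebra I).val (reesPres I f hf F) = _
  rw [← AlgHom.comp_apply, reesPres, MvPolynomial.comp_aeval]
  rfl

theorem mem_ker_reesPres_iff {m : ℕ} {F : MvPolynomial (Fin n) A} (hF : F.IsHomogeneous m) :
    F ∈ RingHom.ker (reesPres I f hf : MvPolynomial (Fin n) A →+* reesAlgebra I) ↔
      MvPolynomial.eval f F = 0 := by
  rw [RingHom.mem_ker, AlgHom.coe_toRingHom, ← Subtype.coe_inj, coe_reesPres_apply,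
    MvPolynomial.aeval_C_mul_X_of_isHomogeneous hF, Polynomial.C_mul_X_pow_eq_monomial,
    ZeroMemClass.coe_zero, Polynomial.monomial_eq_zero_iff]

end ReesPresentation

theorem IsLinearType.mem_span_image2_of_eval_eq_zero {A : Type*} [CommRing A] {I : Ideal A}
    (hI : IsLinearType A I) {n : ℕ} {g : Fin n → A} (hg : Ideal.span (Set.range g) = I)
    {s : ℕ} {P : MvPolynomial (Fin n) A} (hP : P.IsHomogeneous (s + 1))
    (hPg : MvPolynomial.eval g P = 0) :
    P ∈ Submodule.span A (Set.image2 (· * ·) {a | a.IsHomogeneous s}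
      {L | L.IsHomogeneous 1 ∧ MvPolynomial.eval g L = 0}) := by
  have hgI : ∀ i, g i ∈ I := fun i => hg ▸ Ideal.subset_span ⟨i, rfl⟩
  have hker := (mem_ker_reesPres_iff hgI hP).mpr hPg
  rw [hI n g hgI hg] at hker
  refine Submodule.span_mono (Set.image2_subset_left ?_)
    (MvPolynomial.mem_span_image2_of_mem_span (fun L hL => hL.2) hker hP)
  rintro L ⟨hLker, hL⟩
  exact ⟨hL, (mem_ker_reesPres_iff hgI hL).mp hLker⟩

theorem valla_linear_type_general {R : Type*} [CommRing R] [IsNoetherianRing R]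
    (I J : Ideal R) (hJI : J ≤ I)
    (hlt : IsLinearType (R ⧸ J) (I.map (Ideal.Quotient.mk J))) :
    ∀ t : ℕ, 1 ≤ t → J ⊓ I ^ t = J * I ^ (t - 1) := by
  intro t ht
  obtain ⟨s, rfl⟩ := Nat.exists_eq_add_of_le' ht
  rw [Nat.add_sub_cancel]
  refine le_antisymm ?_
    (le_inf Ideal.mul_le_left ((Ideal.mul_mono_left hJI).trans_eq (pow_succ' I s).symm))
  rintro x ⟨hxJ, hxI⟩
  obtain ⟨n, f, hf⟩ :=
    Submodule.fg_iff_exists_fin_generating_family.mp (IsNoetherian.noetherian I)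
  have hfI : ∀ i, f i ∈ I := fun i => hf ▸ Submodule.subset_span ⟨i, rfl⟩
  obtain ⟨F, hF, rfl⟩ := (Ideal.mem_span_pow_iff_exists_isHomogeneous f x).mp (hf ▸ hxI)
  let π := Ideal.Quotient.mk J
  have hg : Ideal.span (Set.range (π ∘ f)) = I.map π := by
    rw [← hf, Ideal.map_span, Set.range_comp]
  have hFg : MvPolynomial.eval (π ∘ f) (MvPolynomial.map π F) = 0 := by
    rwa [← MvPolynomial.map_eval, Ideal.Quotient.eq_zero_iff_mem]
  obtain ⟨G, hG, hGF, hGJ⟩ :=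
    MvPolynomial.exists_isHomogeneous_map_eq_and_eval_mem_mul_pow hfI
      (hlt.mem_span_image2_of_eval_eq_zero hg (hF.map π) hFg)
  have hFG : MvPolynomial.eval f (F - G) ∈ J * I ^ (s + 1) :=
    MvPolynomial.eval_mem_mul_pow_of_coeff_mem hfI (hF.sub hG) fun d => by
      rw [← Ideal.Quotient.eq_zero_iff_mem, ← MvPolynomial.coeff_map, map_sub, hGF, sub_self,
        MvPolynomial.coeff_zero]
  simpa using add_mem (Ideal.mul_mono_right (Ideal.pow_le_pow_right s.le_succ) hFG) hGJ

/-- Valla: if `J ⊆ I ⊊ R` are ideals of a Noetherian local ring and `I/J`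
is of linear type over `R/J`, then `J ∩ I^t = J·I^{t-1}` for every positive integer `t`. -/
theorem valla_linear_type {R : Type*} [CommRing R] [IsNoetherianRing R] [IsLocalRing R]
    (I J : Ideal R) (hJI : J ≤ I) (hI : I ≠ ⊤)
    (hlt : IsLinearType (R ⧸ J) (I.map (Ideal.Quotient.mk J))) :
    ∀ t : ℕ, 1 ≤ t → J ⊓ I ^ t = J * I ^ (t - 1) :=
  valla_linear_type_general I J hJI hlt
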